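/- arXiv:1401.3251 — 4 statements merged into one kernel-verified Lean document; each statement's English description precedes it below -/
import Mathlib

section
/- If H is an induced subgraph of a graph G, then φ(G) ≤ φ(H) + χ(G \ H), where G \ H is the subgraph induced on V(G) - V(H). -/
/-!
Colour `H` optimally with even colours and `G \ H` with `χ(G \ H)` odd colours. On an induced
subgraph `G[T]` the odd colours add at most `χ(G \ H)` colours to those seen on `H[T ∩ V(H)]`,
while `χ(G[T]) ≥ χ(H[T ∩ V(H)])`; so every discrepancy of the glued colouring of `G` is at most a
discrepancy of the colouring of `H` plus `χ(G \ H)`.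
-/

open SimpleGraph

noncomputable def chi {W : Type*} (G : SimpleGraph W) : ℕ := G.chromaticNumber.toNat

def IsProper {W : Type*} (G : SimpleGraph W) (c : W → ℕ) : Prop :=
  ∀ ⦃u v⦄, G.Adj u v → c u ≠ c v

noncomputable def disc {W : Type*} (G : SimpleGraph W) (c : W → ℕ) (s : Finset W) : ℕ :=
  (s.image c).card - chi (G.induce (s : Set W))

noncomputable def phiC {W : Type*} [Fintype W] (G : SimpleGraph W) (c : W → ℕ) : ℕ :=
  Finset.univ.sup (disc G c)

noncomputable def phi {W : Type*} [Fintype W] (G : SimpleGraph W) : ℕ :=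
  sInf {n | ∃ c, IsProper G c ∧ phiC G c = n}

open Classical in
noncomputable def phiHatC {W : Type*} [Fintype W] (G : SimpleGraph W) (c : W → ℕ) : ℕ :=
  Finset.univ.sup (fun s : Finset W =>
    if (G.induce (s : Set W)).Connected then disc G c s else 0)

noncomputable def phiHat {W : Type*} [Fintype W] (G : SimpleGraph W) : ℕ :=
  sInf {n | ∃ c, IsProper G c ∧ phiHatC G c = n}

open Classical in
noncomputable def indepNum' {W : Type*} [Fintype W] (G : SimpleGraph W) : ℕ :=
  Finset.univ.sup fun s : Finset W =>
    if ∀ u ∈ s, ∀ v ∈ s, ¬ G.Adj u v then s.card else 0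

open Classical in
noncomputable def cliqueNum' {W : Type*} [Fintype W] (G : SimpleGraph W) : ℕ :=
  Finset.univ.sup fun s : Finset W =>
    if G.IsClique (s : Set W) then s.card else 0

lemma chi_le_of_hom {A B : Type*} [Finite B] {G : SimpleGraph A} {G' : SimpleGraph B}
    (f : G →g G') : chi G ≤ chi G' :=
  ENat.toNat_le_toNat (chromaticNumber_mono_of_hom f)
    (chromaticNumber_ne_top_iff_exists.mpr ⟨_, G'.colorable_chromaticNumber_of_fintype⟩)

lemma chi_induce_induce_le {V : Type*} {G : SimpleGraph V} {s T : Set V} [Finite T]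
    {A : Set s} (hA : ∀ x ∈ A, x.1 ∈ T) : chi ((G.induce s).induce A) ≤ chi (G.induce T) :=
  chi_le_of_hom ⟨fun x => ⟨x.1.1, hA _ x.2⟩, id⟩

lemma isProper_coloring {W : Type*} {G : SimpleGraph W} {n : ℕ} (C : G.Coloring (Fin n)) :
    IsProper G (fun v => (C v : ℕ)) :=
  fun _ _ huv he => C.valid huv (Fin.val_injective he)

lemma exists_isProper_phiC_eq_phi {W : Type*} [Fintype W] (G : SimpleGraph W) :
    ∃ c, IsProper G c ∧ phiC G c = phi G := by
  obtain ⟨f⟩ : Nonempty (W ↪ ℕ) := ⟨(Fintype.equivFin W).toEmbedding.trans Fin.valEmbedding⟩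
  exact Nat.sInf_mem (s := {n | ∃ c, IsProper G c ∧ phiC G c = n})
    ⟨phiC G f, f, fun _ _ huv he => G.ne_of_adj huv (f.injective he), rfl⟩

lemma phi_le_phiC {W : Type*} [Fintype W] {G : SimpleGraph W} {c : W → ℕ} (hc : IsProper G c) :
    phi G ≤ phiC G c :=
  Nat.sInf_le ⟨c, hc, rfl⟩

section Glue

variable {V : Type*} [Fintype V] [DecidableEq V] {G : SimpleGraph V} {s : Finset V}
  {c₁ : ↥(s : Set V) → ℕ} {c₂ : ↥((sᶜ : Finset V) : Set V) → ℕ}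

def glueColoring (s : Finset V) (c₁ : ↥(s : Set V) → ℕ) (c₂ : ↥((sᶜ : Finset V) : Set V) → ℕ) :
    V → ℕ :=
  fun v => if h : v ∈ s then 2 * c₁ ⟨v, h⟩ else 2 * c₂ ⟨v, by simpa using h⟩ + 1

lemma isProper_glueColoring (hc₁ : IsProper (G.induce (s : Set V)) c₁)
    (hc₂ : IsProper (G.induce ((sᶜ : Finset V) : Set V)) c₂) :
    IsProper G (glueColoring s c₁ c₂) := by
  intro u v huv
  unfold glueColoring
  by_cases hu : u ∈ s <;> by_cases hv : v ∈ s <;> simp only [hu, hv, dite_true, dite_false]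
  · have := hc₁ (u := ⟨u, hu⟩) (v := ⟨v, hv⟩) huv
    omega
  · omega
  · omega
  · have := hc₂ (u := ⟨u, by simpa using hu⟩) (v := ⟨v, by simpa using hv⟩) huv
    omega

lemma image_glueColoring_subset {n : ℕ} (hc₂ : ∀ v, c₂ v < n) (T : Finset V) :
    T.image (glueColoring s c₁ c₂) ⊆
      ((T.subtype (· ∈ (s : Set V))).image c₁).image (2 * ·) ∪ (Finset.range n).image (2 * · + 1) := by
  intro x hx
  obtain ⟨v, hvT, rfl⟩ := Finset.mem_image.mp hx
  unfold glueColoring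
  by_cases hv : v ∈ s
  · simp only [hv, dite_true]
    exact Finset.mem_union_left _ <| Finset.mem_image_of_mem _ <|
      Finset.mem_image_of_mem _ (Finset.mem_subtype.mpr hvT)
  · simp only [hv, dite_false]
    exact Finset.mem_union_right _ <| Finset.mem_image_of_mem _ (Finset.mem_range.mpr (hc₂ _))

lemma card_image_glueColoring_le {n : ℕ} (hc₂ : ∀ v, c₂ v < n) (T : Finset V) :
    (T.image (glueColoring s c₁ c₂)).card ≤ ((T.subtype (· ∈ (s : Set V))).image c₁).card + n :=
  calc _ ≤ _ := Finset.card_le_card (image_glueColoring_subset hc₂ T)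
    _ ≤ _ := Finset.card_union_le _ _
    _ ≤ _ := add_le_add Finset.card_image_le (Finset.card_image_le.trans (Finset.card_range n).le)

lemma disc_glueColoring_le {n : ℕ} (hc₂ : ∀ v, c₂ v < n) (T : Finset V) :
    disc G (glueColoring s c₁ c₂) T ≤
      disc (G.induce (s : Set V)) c₁ (T.subtype (· ∈ (s : Set V))) + n := by
  have hcard := card_image_glueColoring_le (c₁ := c₁) hc₂ T
  have hchi : chi ((G.induce (s : Set V)).induce (T.subtype (· ∈ (s : Set V)) : Set _)) ≤
      chi (G.induce (T : Set V)) :=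
    chi_induce_induce_le fun x hx => Finset.mem_subtype.mp hx
  unfold disc
  omega

lemma phiC_glueColoring_le {n : ℕ} (hc₂ : ∀ v, c₂ v < n) :
    phiC G (glueColoring s c₁ c₂) ≤ phiC (G.induce (s : Set V)) c₁ + n :=
  Finset.sup_le fun T _ => (disc_glueColoring_le hc₂ T).trans <|
    add_le_add_left (Finset.le_sup (Finset.mem_univ _)) n

end Glue

theorem stmt2 {V : Type*} [Fintype V] [DecidableEq V] (G : SimpleGraph V) (s : Finset V) :
    phi G ≤ phi (G.induce (s : Set V)) + chi (G.induce ((sᶜ : Finset V) : Set V)) := by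
  obtain ⟨cH, hcH, hcH_opt⟩ := exists_isProper_phiC_eq_phi (G.induce (s : Set V))
  obtain ⟨cK⟩ := (G.induce ((sᶜ : Finset V) : Set V)).colorable_chromaticNumber_of_fintype
  calc phi G ≤ phiC G (glueColoring s cH fun v => cK v) :=
        phi_le_phiC (isProper_glueColoring hcH (isProper_coloring cK))
    _ ≤ _ := hcH_opt ▸ phiC_glueColoring_le fun v => (cK v).2
end

section
/- For any triangle-free graph G, φ̂(G) ≥ ψ(G) - 2, where ψ(G) is the local chromatic number of G. -/
open SimpleGraph

open Classical in
noncomputable def psi {W : Type*} [Fintype W] (G : SimpleGraph W) : ℕ :=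
  sInf {n | ∃ c, IsProper G c ∧
    Finset.univ.sup
      (fun v : W => ((insert v (Finset.univ.filter (G.Adj v))).image c).card) = n}


/-! Take a proper colouring `c` attaining `φ̂(G)`. Every closed neighbourhood `N[v]` induces a
connected subgraph, and when `G` is triangle-free that subgraph is a star, hence 2-colourable.
So `|c(N[v])| ≤ (|c(N[v])| - χ(G[N[v]])) + 2 ≤ φ̂(G) + 2` for every `v`, and `c` itself witnesses
`ψ(G) ≤ φ̂(G) + 2`. -/

open Classical in
noncomputable def closedNbhd {V : Type*} [Fintype V] (G : SimpleGraph V) (v : V) : Finset V :=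
  insert v (Finset.univ.filter (G.Adj v))

section

variable {V : Type*} [Fintype V] (G : SimpleGraph V)

theorem mem_closedNbhd {u v : V} : u ∈ closedNbhd G v ↔ u = v ∨ G.Adj v u := by
  simp [closedNbhd]

theorem self_mem_closedNbhd (v : V) : v ∈ closedNbhd G v :=
  (mem_closedNbhd G).2 (Or.inl rfl)

theorem psi_le_sup_card_image_closedNbhd {c : V → ℕ} (hc : IsProper G c) :
    psi G ≤ Finset.univ.sup (fun v : V => ((closedNbhd G v).image c).card) :=
  Nat.sInf_le ⟨c, hc, rfl⟩

theorem connected_induce_closedNbhd (v : V) :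
    (G.induce (closedNbhd G v : Set V)).Connected := by
  have : Nonempty (closedNbhd G v : Set V) := ⟨⟨v, self_mem_closedNbhd G v⟩⟩
  have toCenter : ∀ z : (closedNbhd G v : Set V),
      (G.induce (closedNbhd G v : Set V)).Reachable z ⟨v, self_mem_closedNbhd G v⟩ := by
    rintro ⟨z, hz⟩
    rcases (mem_closedNbhd G).1 hz with rfl | hvz
    · rfl
    · exact Adj.reachable (G := G.induce _) hvz.symm
  exact ⟨fun x y => (toCenter x).trans (toCenter y).symm⟩

theorem colorable_induce_closedNbhd_of_cliqueFree (hG : G.CliqueFree 3) (v : V) :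
    (G.induce (closedNbhd G v : Set V)).Colorable 2 := by
  classical
  refine ⟨⟨fun z => if z.1 = v then 0 else 1, ?_⟩⟩
  rintro ⟨a, ha⟩ ⟨b, hb⟩ (hab : G.Adj a b)
  rcases (mem_closedNbhd G).1 ha with rfl | hva <;>
    rcases (mem_closedNbhd G).1 hb with rfl | hvb
  · exact absurd hab (G.loopless.irrefl _)
  · simp [hab.ne.symm]
  · simp [hab.ne]
  · exact absurd (is3Clique_triple_iff.2 ⟨hva, hvb, hab⟩) (hG _)

end

theorem chi_le_of_colorable {W : Type*} {G : SimpleGraph W} {n : ℕ} (h : G.Colorable n) :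
    chi G ≤ n := by
  simpa [chi] using ENat.toNat_le_toNat h.chromaticNumber_le (ENat.natCast_ne_top n)

theorem card_image_le_disc_add_chi {W : Type*} (G : SimpleGraph W) (c : W → ℕ) (s : Finset W) :
    (s.image c).card ≤ disc G c s + chi (G.induce (s : Set W)) := by
  unfold disc
  omega

theorem disc_le_phiHatC {W : Type*} [Fintype W] (G : SimpleGraph W) (c : W → ℕ) {s : Finset W}
    (hs : (G.induce (s : Set W)).Connected) : disc G c s ≤ phiHatC G c := by
  classical
  simpa [phiHatC, hs] using Finset.le_sup (f := fun t : Finset W =>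
    if (G.induce (t : Set W)).Connected then disc G c t else 0) (Finset.mem_univ s)

theorem exists_isProper_phiHatC_eq_phiHat {W : Type*} [Fintype W] (G : SimpleGraph W) :
    ∃ c, IsProper G c ∧ phiHatC G c = phiHat G := by
  let e := Fintype.equivFin W
  have hproper : IsProper G (fun w => (e w : ℕ)) := fun u v huv h =>
    huv.ne (e.injective (Fin.ext h))
  exact Nat.sInf_mem (s := {n | ∃ c, IsProper G c ∧ phiHatC G c = n}) ⟨_, _, hproper, rfl⟩

theorem stmt12 {V : Type*} [Fintype V] (G : SimpleGraph V) (hG : G.CliqueFree 3) :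
    psi G - 2 ≤ phiHat G := by
  obtain ⟨c, hc, hcφ⟩ := exists_isProper_phiHatC_eq_phiHat G
  have hlocal : ∀ v, ((closedNbhd G v).image c).card ≤ phiHatC G c + 2 := fun v =>
    calc ((closedNbhd G v).image c).card
        ≤ disc G c (closedNbhd G v) + chi (G.induce (closedNbhd G v : Set V)) :=
          card_image_le_disc_add_chi G c _
      _ ≤ phiHatC G c + 2 :=
          add_le_add (disc_le_phiHatC G c (connected_induce_closedNbhd G v))
            (chi_le_of_colorable (colorable_induce_closedNbhd_of_cliqueFree G hG v))
  have hψ : psi G ≤ phiHatC G c + 2 :=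
    (psi_le_sup_card_image_closedNbhd G hc).trans (Finset.sup_le fun v _ => hlocal v)
  omega
end

section
/- φ(G) = 0 if and only if G is a complete multipartite graph. -/
open SimpleGraph

def IsCompleteMultipartite' {W : Type*} (G : SimpleGraph W) : Prop :=
  ∃ (ι : Type) (f : W → ι), ∀ u v : W, G.Adj u v ↔ f u ≠ f v

/-!
If `c` is a proper colouring with `φ_c(G) = 0`, two non-adjacent vertices `x, y` must share a
colour: otherwise `{x, y}` carries two colours but induces an edgeless graph, of chromatic number
at most one. So `G.Adj u v ↔ c u ≠ c v`, and the colour classes are the parts. Conversely, if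
each part gets its own colour, then in every induced subgraph one representative per colour spans
a clique, so `χ(H) ≥ |c(H)|`.
-/

namespace SimpleGraph

variable {W : Type*} {G : SimpleGraph W}

lemma chi_le_of_colorable {n : ℕ} (h : G.Colorable n) : chi G ≤ n :=
  ENat.toNat_le_of_le_natCast h.chromaticNumber_le

lemma card_le_chi_of_hom_top [Finite W] {α : Type*} [Fintype α]
    (f : (⊤ : SimpleGraph α) →g G) : Fintype.card α ≤ chi G := by
  have hfin : G.chromaticNumber ≠ ⊤ := by
    cases nonempty_fintype W
    exact chromaticNumber_ne_top_iff_exists.mpr ⟨_, G.colorable_of_fintype⟩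
  have hle := chromaticNumber_mono_of_hom f
  rw [chromaticNumber_top] at hle
  simpa [chi] using ENat.toNat_le_toNat hle hfin

lemma isProper_of_injective {c : W → ℕ} (hc : Function.Injective c) : IsProper G c :=
  fun _ _ huv h => huv.ne (hc h)

lemma phi_eq_zero_iff [Fintype W] : phi G = 0 ↔ ∃ c, IsProper G c ∧ phiC G c = 0 := by
  obtain ⟨c, hc⟩ := Countable.exists_injective_nat W
  have hne : {n | ∃ c, IsProper G c ∧ phiC G c = n} ≠ ∅ :=
    Set.nonempty_iff_ne_empty.mp ⟨_, c, isProper_of_injective hc, rfl⟩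
  simp only [phi, Nat.sInf_eq_zero, hne, or_false, Set.mem_ofPred_eq]

lemma induce_pair_eq_bot {x y : W} (hxy : ¬ G.Adj x y) : G.induce {x, y} = ⊥ := by
  have hyx : ¬ G.Adj y x := fun h => hxy h.symm
  ext ⟨a, ha⟩ ⟨b, hb⟩
  rcases ha with rfl | rfl <;> rcases hb with rfl | rfl <;> simp [hxy, hyx]

lemma eq_of_not_adj_of_phiC_eq_zero [Fintype W] {c : W → ℕ} (hc : phiC G c = 0) {x y : W}
    (hxy : ¬ G.Adj x y) : c x = c y := by
  classical
  by_contra hcxy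
  have hdisc : disc G c {x, y} = 0 :=
    Nat.le_zero.mp (hc ▸ Finset.le_sup (Finset.mem_univ {x, y}))
  have hcard : (({x, y} : Finset W).image c).card = 2 := by
    rw [Finset.image_insert, Finset.image_singleton, Finset.card_pair hcxy]
  have hchi : chi (G.induce (({x, y} : Finset W) : Set W)) ≤ 1 := by
    rw [Finset.coe_pair]
    exact chi_le_of_colorable (colorable_one_iff.mpr (induce_pair_eq_bot hxy))
  unfold disc at hdisc
  omega

lemma phiC_eq_zero_of_adj_iff [Fintype W] {c : W → ℕ}
    (hc : ∀ u v, G.Adj u v ↔ c u ≠ c v) : phiC G c = 0 := by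
  classical
  refine Finset.sup_eq_bot_iff _ _ |>.mpr fun s _ => Nat.sub_eq_zero_of_le ?_
  choose rep hrep_mem hrep using fun k : s.image c => Finset.mem_image.mp k.2
  let f : (⊤ : SimpleGraph (s.image c)) →g G.induce (s : Set W) :=
    { toFun := fun k => ⟨rep k, hrep_mem k⟩
      map_rel' := fun {k l} hkl => (hc _ _).mpr <| by
        simpa [hrep] using Subtype.val_injective.ne hkl }
  simpa using card_le_chi_of_hom_top f

lemma exists_isProper_phiC_eq_zero_iff [Fintype W] :
    (∃ c, IsProper G c ∧ phiC G c = 0) ↔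
      ∃ c : W → ℕ, ∀ u v, G.Adj u v ↔ c u ≠ c v := by
  constructor
  · rintro ⟨c, hproper, hc⟩
    exact ⟨c, fun u v =>
      ⟨fun h => hproper h, not_imp_comm.mp (eq_of_not_adj_of_phiC_eq_zero hc)⟩⟩
  · rintro ⟨c, hc⟩
    exact ⟨c, fun u v huv => (hc u v).mp huv, phiC_eq_zero_of_adj_iff hc⟩

lemma isCompleteMultipartite'_iff_exists_nat [Finite W] :
    IsCompleteMultipartite' G ↔ ∃ c : W → ℕ, ∀ u v, G.Adj u v ↔ c u ≠ c v := by
  constructor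
  · rintro ⟨ι, f, hf⟩
    obtain ⟨g, hg⟩ := Countable.exists_injective_nat (Set.range f)
    refine ⟨fun v => g ⟨f v, v, rfl⟩, fun u v => (hf u v).trans ?_⟩
    simp only [ne_eq, hg.eq_iff, Subtype.ext_iff]
  · rintro ⟨c, hc⟩
    exact ⟨ℕ, c, hc⟩

end SimpleGraph

theorem stmt13 {V : Type*} [Fintype V] (G : SimpleGraph V) :
    phi G = 0 ↔ IsCompleteMultipartite' G := by
  rw [phi_eq_zero_iff, exists_isProper_phiC_eq_zero_iff,
    isCompleteMultipartite'_iff_exists_nat]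
end

section
/- For every pair of integers c ≥ 1 and 0 ≤ p ≤ c - 1, the graph G = K_c ∪ p·K_p (disjoint union of K_c with p copies of K_p) is perfect, has χ(G) = c, and satisfies φ(G) = p. -/
open SimpleGraph

def sameBlock (c p : ℕ) : (Fin c ⊕ Fin p × Fin p) → Option (Fin p)
  | Sum.inl _ => none
  | Sum.inr a => some a.1

/-- The disjoint union `K_c ∪ p·K_p`: a clique on `Fin c` together with `p`
disjoint copies of `K_p` (vertices of copy `i` are `Sum.inr (i, ·)`). -/
def Gcp (c p : ℕ) : SimpleGraph (Fin c ⊕ Fin p × Fin p) :=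
  SimpleGraph.fromRel (fun u v => sameBlock c p u = sameBlock c p v)

def IsPerfect {W : Type*} [Fintype W] (G : SimpleGraph W) : Prop :=
  ∀ s : Finset W, chi (G.induce (s : Set W)) = cliqueNum' (G.induce (s : Set W))

/-!
`K_c ∪ p·K_p` is a cluster graph (a disjoint union of cliques, the fibres of `sameBlock`), and
so is every induced subgraph of a cluster graph. Colouring each fibre injectively by colours
below the clique number gives `χ = ω`, so cluster graphs are perfect.

Colouring vertex `j` of every clique by `j` uses `c` colours, which gives `χ(G) = c`, and on an
induced subgraph `H` it uses at most `p` colours besides those of `H ∩ K_c`, a clique of `H`;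
hence `φ ≤ p`. Conversely, for any proper colouring, Hall's theorem picks one vertex from each
of the `p + 1` cliques with pairwise distinct colours (each `K_p` sees `p` colours and `K_c`
sees `c > p`); this independent set `H` has `p + 1` colours and `χ(H) ≤ 1`, so `φ ≥ p`.
-/

open Finset

section Coloring

variable {V : Type*} {G : SimpleGraph V}

lemma colorable_chi [Finite V] : G.Colorable (chi G) :=
  G.colorable_chromaticNumber_of_fintype

lemma chi_le_of_isProper [Finite V] {χ : V → ℕ} {n : ℕ} (hχ : IsProper G χ)
    (hlt : ∀ v, χ v < n) : chi G ≤ n := by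
  have hcol : G.Colorable n :=
    (colorable_iff_exists_bdd_nat_coloring n).2 ⟨Coloring.mk χ fun h ↦ hχ h, hlt⟩
  have hfin : G.chromaticNumber ≠ ⊤ := chromaticNumber_ne_top_iff_exists.2 ⟨n, hcol⟩
  simpa [chi, ← ENat.natCast_le_natCast, ENat.natCast_toNat hfin] using hcol.chromaticNumber_le

lemma card_le_chi_induce [Finite V] {s : Set V} {t : Finset V} (hts : ↑t ⊆ s)
    (ht : G.IsClique (t : Set V)) : #t ≤ chi (G.induce s) := by
  simpa using colorable_chi.card_le_of_pairwise_adj (fun x : t ↦ (⟨x, hts x.2⟩ : s))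
    fun x y hxy ↦ ht x.2 y.2 (Subtype.coe_ne_coe.2 hxy)

lemma SimpleGraph.IsClique.card_le_chi [Finite V] {t : Finset V} (ht : G.IsClique (t : Set V)) :
    #t ≤ chi G := by
  simpa using colorable_chi.card_le_of_pairwise_adj (fun x : t ↦ (x : V))
    fun x y hxy ↦ ht x.2 y.2 (Subtype.coe_ne_coe.2 hxy)

lemma chi_induce_le_one_of_isIndepSet [Finite V] {s : Set V} (hs : G.IsIndepSet s) :
    chi (G.induce s) ≤ 1 :=
  chi_le_of_isProper (χ := fun _ ↦ 0)
    (fun x y hxy ↦ absurd hxy (hs x.2 y.2 (G.ne_of_adj hxy))) fun _ ↦ one_pos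

lemma IsProper.injOn_of_isClique {χ : V → ℕ} (hχ : IsProper G χ) {s : Set V}
    (hs : G.IsClique s) : Set.InjOn χ s := fun _ hx _ hy h ↦
  by_contra fun hxy ↦ hχ (hs hx hy hxy) h

lemma SimpleGraph.IsClique.card_le_cliqueNum' [Fintype V] {t : Finset V}
    (ht : G.IsClique (t : Set V)) :
    #t ≤ cliqueNum' G := by
  classical
  simpa [cliqueNum', ht] using
    le_sup (f := fun s : Finset V ↦ if G.IsClique (s : Set V) then #s else 0) (mem_univ t)

lemma cliqueNum'_le_chi [Fintype V] : cliqueNum' G ≤ chi G := by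
  classical
  refine Finset.sup_le fun t _ ↦ ?_
  split_ifs with ht
  exacts [ht.card_le_chi, Nat.zero_le _]

lemma le_phiC_of_isIndepSet [Fintype V] {χ : V → ℕ} {s : Finset V}
    (hs : G.IsIndepSet (s : Set V)) (hχ : Set.InjOn χ s) : #s - 1 ≤ phiC G χ :=
  calc #s - 1 ≤ disc G χ s := by
        rw [disc, card_image_of_injOn hχ]
        have := chi_induce_le_one_of_isIndepSet hs
        omega
    _ ≤ phiC G χ := le_sup (mem_univ s)

end Coloring

lemma Finset.exists_injOn_lt_of_card_le {α : Type*} {s : Finset α} {n : ℕ} (h : #s ≤ n) :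
    ∃ g : α → ℕ, Set.InjOn g s ∧ ∀ x ∈ s, g x < n := by
  classical
  refine ⟨fun x ↦ if hx : x ∈ s then s.equivFin ⟨x, hx⟩ else 0, ?_, fun x hx ↦ ?_⟩
  · intro x hx y hy hxy
    simpa [dif_pos (mem_coe.1 hx), dif_pos (mem_coe.1 hy), Fin.val_inj] using hxy
  · simpa [dif_pos hx] using ((s.equivFin ⟨x, hx⟩).2.trans_le h)

lemma Finset.exists_injective_mem_of_exists_card_le {ι α : Type*} [DecidableEq α]
    (t : ι → Finset α) (h : ∀ s : Finset ι, s.Nonempty → ∃ i ∈ s, #s ≤ #(t i)) :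
    ∃ f : ι → α, Function.Injective f ∧ ∀ i, f i ∈ t i := by
  refine (all_card_le_biUnion_card_iff_exists_injective t).1 fun s ↦ ?_
  obtain rfl | hs := s.eq_empty_or_nonempty
  · simp
  obtain ⟨i, hi, hcard⟩ := h s hs
  exact hcard.trans (card_le_card (subset_biUnion_of_mem t hi))

namespace SimpleGraph

variable {V B : Type*}

def clusterGraph (f : V → B) : SimpleGraph V :=
  fromRel fun u v ↦ f u = f v

variable {f : V → B}

@[simp]
lemma clusterGraph_adj {u v : V} : (clusterGraph f).Adj u v ↔ u ≠ v ∧ f u = f v := by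
  simp [clusterGraph, eq_comm]

lemma induce_clusterGraph (s : Set V) :
    (clusterGraph f).induce s = clusterGraph fun x : s ↦ f x := by
  ext x y
  simp [Subtype.coe_ne_coe]

lemma isClique_clusterGraph_fiber (b : B) : (clusterGraph f).IsClique {x | f x = b} :=
  fun _ hx _ hy hxy ↦ clusterGraph_adj.2 ⟨hxy, hx.trans hy.symm⟩

lemma isIndepSet_clusterGraph_of_injOn {s : Set V} (hs : Set.InjOn f s) :
    (clusterGraph f).IsIndepSet s :=
  fun _ hx _ hy hxy hadj ↦ hxy (hs hx hy (clusterGraph_adj.1 hadj).2)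

lemma chi_clusterGraph_le_cliqueNum' [Fintype V] [DecidableEq B] :
    chi (clusterGraph f) ≤ cliqueNum' (clusterGraph f) := by
  have hfiber (b : B) : #{x | f x = b} ≤ cliqueNum' (clusterGraph f) :=
    IsClique.card_le_cliqueNum' (by simpa using isClique_clusterGraph_fiber b)
  choose g hinj hlt using fun b ↦ Finset.exists_injOn_lt_of_card_le (hfiber b)
  refine chi_le_of_isProper (χ := fun x ↦ g (f x) x) (fun u v huv heq ↦ ?_)
    fun x ↦ hlt _ x (by simp)
  obtain ⟨hne, hf⟩ := clusterGraph_adj.1 huv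
  simp only [hf] at heq
  exact hne (hinj (f v) (by simpa using hf) (by simp) heq)

lemma isPerfect_clusterGraph [Fintype V] (f : V → B) : IsPerfect (clusterGraph f) := by
  classical
  intro s
  rw [induce_clusterGraph]
  exact chi_clusterGraph_le_cliqueNum'.antisymm cliqueNum'_le_chi

lemma exists_rainbow_isIndepSet_clusterGraph [Fintype V] [Fintype B] [DecidableEq B]
    {χ : V → ℕ} (hχ : IsProper (clusterGraph f) χ)
    (hall : ∀ s : Finset B, s.Nonempty → ∃ b ∈ s, #s ≤ #{x | f x = b}) :
    ∃ s : Finset V, #s = Fintype.card B ∧ (clusterGraph f).IsIndepSet s ∧ Set.InjOn χ s := by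
  classical
  obtain ⟨g, hg, hmem⟩ := Finset.exists_injective_mem_of_exists_card_le
    (fun b ↦ ({x | f x = b} : Finset V).image χ) fun s hs ↦ by
      obtain ⟨b, hb, hcard⟩ := hall s hs
      refine ⟨b, hb, ?_⟩
      have hfiber : (clusterGraph f).IsClique (({x | f x = b} : Finset V) : Set V) := by
        simpa using isClique_clusterGraph_fiber b
      rwa [card_image_of_injOn (hχ.injOn_of_isClique hfiber)]
  choose v hv hχv using fun b ↦ mem_image.1 (hmem b)
  have hfv (b : B) : f (v b) = b := by simpa using hv b
  have hv_inj : Function.Injective v := Function.LeftInverse.injective hfv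
  refine ⟨univ.image v, by rw [card_image_of_injective _ hv_inj, card_univ], ?_, ?_⟩
  · refine isIndepSet_clusterGraph_of_injOn ?_
    simp only [coe_image, coe_univ, Set.image_univ]
    rintro _ ⟨a, rfl⟩ _ ⟨b, rfl⟩ h
    rw [hfv, hfv] at h
    rw [h]
  · simp only [coe_image, coe_univ, Set.image_univ]
    rintro _ ⟨a, rfl⟩ _ ⟨b, rfl⟩ h
    rw [hχv, hχv] at h
    rw [hg h]

end SimpleGraph

section Gcp

variable {c p : ℕ}

lemma Gcp_eq_clusterGraph (c p : ℕ) : Gcp c p = clusterGraph (sameBlock c p) := rfl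

@[simp]
lemma sameBlock_inl (i : Fin c) : sameBlock c p (.inl i) = none := rfl

@[simp]
lemma sameBlock_inr (a : Fin p × Fin p) : sameBlock c p (.inr a) = some a.1 := rfl

lemma card_sameBlock_eq_none : #{v | sameBlock c p v = none} = c := by
  have : ({v | sameBlock c p v = none} : Finset (Fin c ⊕ Fin p × Fin p)) = univ.map .inl := by
    ext (i | a) <;> simp
  simp [this]

lemma card_sameBlock_eq_some (i : Fin p) : #{v | sameBlock c p v = some i} = p := by
  have : ({v | sameBlock c p v = some i} : Finset (Fin c ⊕ Fin p × Fin p)) =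
      univ.map ((Function.Embedding.sectR i _).trans .inr) := by
    ext (a | ⟨i', j⟩) <;> simp [eq_comm]
  simp [this]

def indexColoring (c p : ℕ) : Fin c ⊕ Fin p × Fin p → ℕ :=
  Sum.elim (fun i ↦ i) fun a ↦ a.2

lemma isProper_indexColoring : IsProper (Gcp c p) (indexColoring c p) := by
  rintro (i | ⟨i, j⟩) (i' | ⟨i', j'⟩) h
  all_goals
    rw [Gcp_eq_clusterGraph, clusterGraph_adj] at h
    simp_all [indexColoring, Fin.val_inj]

lemma indexColoring_lt (hp : p ≤ c) (v : Fin c ⊕ Fin p × Fin p) : indexColoring c p v < c := by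
  rcases v with i | ⟨i, j⟩
  exacts [i.2, j.2.trans_le hp]

lemma phiC_indexColoring_le : phiC (Gcp c p) (indexColoring c p) ≤ p := by
  refine Finset.sup_le fun (s : Finset (Fin c ⊕ Fin p × Fin p)) _ ↦ ?_
  set A := s.filter (sameBlock c p · = none)
  have hA : #A ≤ chi ((Gcp c p).induce s) :=
    card_le_chi_induce (coe_subset.2 (filter_subset _ s))
      ((isClique_clusterGraph_fiber none).subset (by simp [A]))
  have himage : s.image (indexColoring c p) ⊆ A.image (indexColoring c p) ∪ range p := by
    intro k hk
    obtain ⟨v, hv, rfl⟩ := mem_image.1 hk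
    rcases v with i | ⟨i, j⟩
    · exact mem_union_left _ (mem_image_of_mem _ (mem_filter.2 ⟨hv, rfl⟩))
    · exact mem_union_right _ (mem_range.2 j.2)
  have hcard : #(s.image (indexColoring c p)) ≤ #A + p :=
    calc #(s.image (indexColoring c p)) ≤ #(A.image (indexColoring c p)) + #(range p) :=
          (card_le_card himage).trans (card_union_le _ _)
      _ ≤ #A + p := by simpa using card_image_le
  rw [disc]
  omega

lemma chi_Gcp (hp : p ≤ c) : chi (Gcp c p) = c := by
  refine (chi_le_of_isProper isProper_indexColoring (indexColoring_lt hp)).antisymm ?_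
  rw [Gcp_eq_clusterGraph]
  simpa [card_sameBlock_eq_none] using IsClique.card_le_chi
    (t := {v | sameBlock c p v = none}) (by simpa using isClique_clusterGraph_fiber none)

lemma le_phiC_Gcp (hp : p ≤ c - 1) {χ : Fin c ⊕ Fin p × Fin p → ℕ}
    (hχ : IsProper (Gcp c p) χ) : p ≤ phiC (Gcp c p) χ := by
  obtain rfl | hpc : p = 0 ∨ p < c := by omega
  · exact Nat.zero_le _
  have hall (s : Finset (Option (Fin p))) (hs : s.Nonempty) :
      ∃ b ∈ s, #s ≤ #{v | sameBlock c p v = b} := by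
    by_cases hnone : none ∈ s
    · refine ⟨none, hnone, ?_⟩
      simpa [card_sameBlock_eq_none] using (card_le_univ s).trans (by simpa using hpc)
    · obtain ⟨_ | i, hi⟩ := hs
      · exact absurd hi hnone
      refine ⟨some i, hi, ?_⟩
      have hsub : s ⊆ univ.erase none := fun b hb ↦
        mem_erase.2 ⟨ne_of_mem_of_not_mem hb hnone, mem_univ b⟩
      simpa [card_sameBlock_eq_some] using card_le_card hsub
  obtain ⟨s, hcard, hindep, hinj⟩ := exists_rainbow_isIndepSet_clusterGraph hχ hall
  simpa [hcard, Gcp_eq_clusterGraph] using le_phiC_of_isIndepSet hindep hinj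

lemma phi_Gcp (hp : p ≤ c - 1) : phi (Gcp c p) = p := by
  have hmem : phiC (Gcp c p) (indexColoring c p) ∈
      {n | ∃ χ, IsProper (Gcp c p) χ ∧ phiC (Gcp c p) χ = n} :=
    ⟨_, isProper_indexColoring, rfl⟩
  refine ((Nat.sInf_le hmem).trans phiC_indexColoring_le).antisymm (le_csInf ⟨_, hmem⟩ ?_)
  rintro _ ⟨χ, hχ, rfl⟩
  exact le_phiC_Gcp hp hχ

end Gcp

theorem stmt17_general (c p : ℕ) (hp : p ≤ c - 1) :
    IsPerfect (Gcp c p) ∧ chi (Gcp c p) = c ∧ phi (Gcp c p) = p :=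
  ⟨isPerfect_clusterGraph _, chi_Gcp (by omega), phi_Gcp hp⟩

theorem stmt17 (c p : ℕ) (hc : 1 ≤ c) (hp : p ≤ c - 1) :
    IsPerfect (Gcp c p) ∧ chi (Gcp c p) = c ∧ phi (Gcp c p) = p :=
  stmt17_general c p hp
end
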